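/- Adding the law of excluded middle to LIK yields classical modal logic K: a formula A is derivable in the system obtained from LIK by adding all substitution instances of the excluded-middle axiom p∨¬p if and only if A is derivable in the classical modal logic K (with ◇ primitive and the duality axiom). -/
import Mathlib


/-- Formulas of intuitionistic modal logic. -/
inductive Formula : Type where
  | atom : ℕ → Formula
  | top  : Formula
  | bot  : Formula
  | and  : Formula → Formula → Formula
  | or   : Formula → Formula → Formula
  | imp  : Formula → Formula → Formula
  | box  : Formula → Formula
  | dia  : Formula → Formula
deriving DecidableEq


/-- The system LIK + EM: the Hilbert system LIK (a complete Hilbert base of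
intuitionistic propositional logic as schemata, K□, K◇, N, DP, RV, modus
ponens and necessitation) extended with all substitution instances of the
excluded-middle axiom `p ∨ ¬p`. -/
inductive LIKEM : Formula → Prop where
  | a1 (A B : Formula) : LIKEM (A.imp (B.imp A))
  | a2 (A B C : Formula) : LIKEM ((A.imp (B.imp C)).imp ((A.imp B).imp (A.imp C)))
  | a3 (A B : Formula) : LIKEM ((A.and B).imp A)
  | a4 (A B : Formula) : LIKEM ((A.and B).imp B)
  | a5 (A B : Formula) : LIKEM (A.imp (B.imp (A.and B)))
  | a6 (A B : Formula) : LIKEM (A.imp (A.or B))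
  | a7 (A B : Formula) : LIKEM (B.imp (A.or B))
  | a8 (A B C : Formula) : LIKEM ((A.imp C).imp ((B.imp C).imp ((A.or B).imp C)))
  | exfalso (A : Formula) : LIKEM (Formula.bot.imp A)
  | truth : LIKEM Formula.top
  | kbox (A B : Formula) :
      LIKEM ((Formula.box (A.imp B)).imp ((Formula.box A).imp (Formula.box B)))
  | kdia (A B : Formula) :
      LIKEM ((Formula.box (A.imp B)).imp ((Formula.dia A).imp (Formula.dia B)))
  | nax : LIKEM ((Formula.dia Formula.bot).imp Formula.bot)
  | dp (A B : Formula) :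
      LIKEM ((Formula.dia (A.or B)).imp ((Formula.dia A).or (Formula.dia B)))
  | rv (A B : Formula) :
      LIKEM ((Formula.box (A.or B)).imp ((Formula.dia A).or (Formula.box B)))
  | em (A : Formula) : LIKEM (A.or (A.imp Formula.bot))
  | mp (A B : Formula) : LIKEM (A.imp B) → LIKEM A → LIKEM B
  | nec (A : Formula) : LIKEM A → LIKEM (Formula.box A)

/-- Classical evaluation of a formula under an assignment of truth values to
atoms and to formulas with main connective □ or ◇ (treated as atoms): a
formula satisfying `∀ v, Formula.evalC v A` is exactly a substitution
instance of a classical propositional tautology. -/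
def Formula.evalC (v : Formula → Prop) : Formula → Prop
  | .atom n => v (.atom n)
  | .top => True
  | .bot => False
  | .and A B => A.evalC v ∧ B.evalC v
  | .or A B => A.evalC v ∨ B.evalC v
  | .imp A B => A.evalC v → B.evalC v
  | .box A => v (.box A)
  | .dia A => v (.dia A)

/-- The classical modal logic K, with ◇ primitive: all substitution instances
of classical propositional tautologies, K□, the duality axiom
`(◇p ⊃ ¬□¬p) ∧ (¬□¬p ⊃ ◇p)`, modus ponens and necessitation. -/
inductive ClK : Formula → Prop where
  | taut (A : Formula) : (∀ v : Formula → Prop, A.evalC v) → ClK A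
  | kbox (A B : Formula) :
      ClK ((Formula.box (A.imp B)).imp ((Formula.box A).imp (Formula.box B)))
  | dual (A : Formula) :
      ClK (((Formula.dia A).imp ((Formula.box (A.imp Formula.bot)).imp Formula.bot)).and
        (((Formula.box (A.imp Formula.bot)).imp Formula.bot).imp (Formula.dia A)))
  | mp (A B : Formula) : ClK (A.imp B) → ClK A → ClK B
  | nec (A : Formula) : ClK A → ClK (Formula.box A)

/-! ### Auxiliary development -/

/-- Negation abbreviation. -/
def Formula.neg (A : Formula) : Formula := A.imp Formula.bot

/-- Derivability from a context in LIKEM. -/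
inductive Deriv : List Formula → Formula → Prop where
  | ax {Γ A} : LIKEM A → Deriv Γ A
  | hyp {Γ A} : A ∈ Γ → Deriv Γ A
  | mp {Γ A B} : Deriv Γ (A.imp B) → Deriv Γ A → Deriv Γ B

theorem Deriv.weaken {Γ Γ' A} (h : Deriv Γ A) (hs : Γ ⊆ Γ') : Deriv Γ' A := by
  induction h with
  | ax h => exact .ax h
  | hyp h => exact .hyp (hs h)
  | mp _ _ ih1 ih2 => exact .mp ih1 ih2

theorem likem_id (A : Formula) : LIKEM (A.imp A) :=
  LIKEM.mp _ _ (LIKEM.mp _ _ (LIKEM.a2 A (A.imp A) A) (LIKEM.a1 A (A.imp A))) (LIKEM.a1 A A)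

theorem Deriv.ded_aux {Δ B} (h : Deriv Δ B) :
    ∀ {Γ : List Formula} {A : Formula}, Δ = A :: Γ → Deriv Γ (A.imp B) := by
  induction h with
  | ax h => intro Γ A _; exact .mp (.ax (LIKEM.a1 _ A)) (.ax h)
  | hyp hB =>
    intro Γ A hΔ
    subst hΔ
    rcases List.mem_cons.mp hB with rfl | hB
    · exact .ax (likem_id _)
    · exact .mp (.ax (LIKEM.a1 _ A)) (.hyp hB)
  | mp _ _ ih1 ih2 =>
    intro Γ A hΔ
    exact .mp (.mp (.ax (LIKEM.a2 _ _ _)) (ih1 hΔ)) (ih2 hΔ)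

/-- Deduction theorem. -/
theorem Deriv.ded {Γ A B} (h : Deriv (A :: Γ) B) : Deriv Γ (A.imp B) :=
  h.ded_aux rfl

theorem Deriv.toLIKEM_aux {Δ A} (h : Deriv Δ A) : Δ = [] → LIKEM A := by
  induction h with
  | ax h => exact fun _ => h
  | hyp hA => intro hΔ; subst hΔ; simp at hA
  | mp _ _ ih1 ih2 => intro hΔ; exact LIKEM.mp _ _ (ih1 hΔ) (ih2 hΔ)

theorem Deriv.toLIKEM {A} (h : Deriv [] A) : LIKEM A := h.toLIKEM_aux rfl

/-! ### Propositional lemmas in LIKEM -/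

theorem likem_t1 (A B : Formula) : LIKEM (A.neg.imp (A.imp B)) :=
  Deriv.toLIKEM <| .ded <| .ded <|
    .mp (.ax (LIKEM.exfalso B))
      (.mp (.hyp (show A.neg ∈ [A, A.neg] by simp)) (.hyp (show A ∈ [A, A.neg] by simp)))

theorem likem_t2 (A B : Formula) : LIKEM (A.imp (B.neg.imp ((A.imp B).neg))) :=
  Deriv.toLIKEM <| .ded <| .ded <| .ded <|
    .mp (.hyp (show B.neg ∈ [A.imp B, B.neg, A] by simp))
      (.mp (.hyp (show A.imp B ∈ [A.imp B, B.neg, A] by simp))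
        (.hyp (show A ∈ [A.imp B, B.neg, A] by simp)))

theorem likem_t3 (A B : Formula) : LIKEM (A.neg.imp ((A.and B).neg)) :=
  Deriv.toLIKEM <| .ded <| .ded <|
    .mp (.hyp (show A.neg ∈ [A.and B, A.neg] by simp))
      (.mp (.ax (LIKEM.a3 A B)) (.hyp (show A.and B ∈ [A.and B, A.neg] by simp)))

theorem likem_t4 (A B : Formula) : LIKEM (B.neg.imp ((A.and B).neg)) :=
  Deriv.toLIKEM <| .ded <| .ded <|
    .mp (.hyp (show B.neg ∈ [A.and B, B.neg] by simp))
      (.mp (.ax (LIKEM.a4 A B)) (.hyp (show A.and B ∈ [A.and B, B.neg] by simp)))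

theorem likem_t5 (A B : Formula) : LIKEM (A.neg.imp (B.neg.imp ((A.or B).neg))) :=
  Deriv.toLIKEM <| .ded <| .ded <|
    .mp (.mp (.ax (LIKEM.a8 A B Formula.bot))
        (.hyp (show A.neg ∈ [B.neg, A.neg] by simp)))
      (.hyp (show B.neg ∈ [B.neg, A.neg] by simp))

/-! ### Boolean evaluation and Kalmár completeness -/

def Formula.evalB (v : Formula → Bool) : Formula → Bool
  | .atom n => v (.atom n)
  | .top => true
  | .bot => false
  | .and A B => A.evalB v && B.evalB v
  | .or A B => A.evalB v || B.evalB v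
  | .imp A B => !(A.evalB v) || B.evalB v
  | .box A => v (.box A)
  | .dia A => v (.dia A)

theorem evalC_iff_evalB (v : Formula → Bool) (A : Formula) :
    A.evalC (fun f => v f = true) ↔ A.evalB v = true := by
  induction A with
  | atom n => simp [Formula.evalC, Formula.evalB]
  | top => simp [Formula.evalC, Formula.evalB]
  | bot => simp [Formula.evalC, Formula.evalB]
  | box A _ => simp [Formula.evalC, Formula.evalB]
  | dia A _ => simp [Formula.evalC, Formula.evalB]
  | and A B ihA ihB =>
    cases hA : A.evalB v <;> cases hB : B.evalB v <;>
      simp_all [Formula.evalC, Formula.evalB]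
  | or A B ihA ihB =>
    cases hA : A.evalB v <;> cases hB : B.evalB v <;>
      simp_all [Formula.evalC, Formula.evalB]
  | imp A B ihA ihB =>
    cases hA : A.evalB v <;> cases hB : B.evalB v <;>
      simp_all [Formula.evalC, Formula.evalB]

/-- The atomic subformulas (atoms, boxes, diamonds) of a formula. -/
def Formula.atoms : Formula → List Formula
  | .atom n => [.atom n]
  | .top => []
  | .bot => []
  | .and A B => A.atoms ++ B.atoms
  | .or A B => A.atoms ++ B.atoms
  | .imp A B => A.atoms ++ B.atoms
  | .box A => [.box A]
  | .dia A => [.dia A]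

def lit (v : Formula → Bool) (a : Formula) : Formula := if v a then a else a.neg

theorem kalmar (v : Formula → Bool) (A : Formula) :
    Deriv (A.atoms.map (lit v)) (if A.evalB v = true then A else A.neg) := by
  induction A with
  | atom n =>
    by_cases h : v (.atom n) = true <;>
      simp [Formula.evalB, Formula.atoms, h] <;>
      exact Deriv.hyp (show _ ∈ [lit v (.atom n)] by simp [lit, h])
  | top => simpa [Formula.evalB, Formula.atoms] using Deriv.ax LIKEM.truth
  | bot => simpa [Formula.evalB, Formula.atoms, Formula.neg] using
      Deriv.ax (likem_id Formula.bot)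
  | box A _ =>
    by_cases h : v (.box A) = true <;>
      simp [Formula.evalB, Formula.atoms, h] <;>
      exact Deriv.hyp (show _ ∈ [lit v (.box A)] by simp [lit, h])
  | dia A _ =>
    by_cases h : v (.dia A) = true <;>
      simp [Formula.evalB, Formula.atoms, h] <;>
      exact Deriv.hyp (show _ ∈ [lit v (.dia A)] by simp [lit, h])
  | and A B ihA ihB =>
    have dA := ihA.weaken (List.subset_append_left (A.atoms.map (lit v)) (B.atoms.map (lit v)))
    have dB := ihB.weaken (List.subset_append_right (A.atoms.map (lit v)) (B.atoms.map (lit v)))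
    cases hA : A.evalB v <;> cases hB : B.evalB v <;>
      simp [hA] at dA <;> simp [hB] at dB <;>
      simp [Formula.evalB, Formula.atoms, hA, hB]
    · exact .mp (.ax (likem_t3 A B)) dA
    · exact .mp (.ax (likem_t3 A B)) dA
    · exact .mp (.ax (likem_t4 A B)) dB
    · exact .mp (.mp (.ax (LIKEM.a5 A B)) dA) dB
  | or A B ihA ihB =>
    have dA := ihA.weaken (List.subset_append_left (A.atoms.map (lit v)) (B.atoms.map (lit v)))
    have dB := ihB.weaken (List.subset_append_right (A.atoms.map (lit v)) (B.atoms.map (lit v)))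
    cases hA : A.evalB v <;> cases hB : B.evalB v <;>
      simp [hA] at dA <;> simp [hB] at dB <;>
      simp [Formula.evalB, Formula.atoms, hA, hB]
    · exact .mp (.mp (.ax (likem_t5 A B)) dA) dB
    · exact .mp (.ax (LIKEM.a7 A B)) dB
    · exact .mp (.ax (LIKEM.a6 A B)) dA
    · exact .mp (.ax (LIKEM.a6 A B)) dA
  | imp A B ihA ihB =>
    have dA := ihA.weaken (List.subset_append_left (A.atoms.map (lit v)) (B.atoms.map (lit v)))
    have dB := ihB.weaken (List.subset_append_right (A.atoms.map (lit v)) (B.atoms.map (lit v)))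
    cases hA : A.evalB v <;> cases hB : B.evalB v <;>
      simp [hA] at dA <;> simp [hB] at dB <;>
      simp [Formula.evalB, Formula.atoms, hA, hB]
    · exact .mp (.ax (likem_t1 A B)) dA
    · exact .mp (.ax (likem_t1 A B)) dA
    · exact .mp (.mp (.ax (likem_t2 A B)) dA) dB
    · exact .mp (.ax (LIKEM.a1 B A)) dB

theorem elim_atoms (A : Formula) :
    ∀ (l : List Formula), l.Nodup →
      (∀ v : Formula → Bool, Deriv (l.map (lit v)) A) → LIKEM A := by
  intro l
  induction l with
  | nil => intro _ h; exact (h (fun _ => false)).toLIKEM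
  | cons a l ih =>
    intro hnd h
    have hna : a ∉ l := (List.nodup_cons.mp hnd).1
    apply ih (List.nodup_cons.mp hnd).2
    intro v
    have key : ∀ (b : Bool),
        Deriv ((lit (fun x => if x = a then b else v x) a) :: l.map (lit v)) A := by
      intro b
      have h' := h (fun x => if x = a then b else v x)
      have heq : l.map (lit (fun x => if x = a then b else v x)) = l.map (lit v) := by
        apply List.map_congr_left
        intro x hx
        have hne : x ≠ a := fun hxa => hna (hxa ▸ hx)
        simp [lit, hne]
      rw [List.map_cons, heq] at h'
      exact h'
    have h1 : Deriv (l.map (lit v)) (a.imp A) := by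
      have hk := key true
      simp only [lit, if_pos rfl, if_pos] at hk
      exact hk.ded
    have h0 : Deriv (l.map (lit v)) (a.neg.imp A) := by
      have hk := key false
      simp only [lit, if_pos rfl] at hk
      simp at hk
      exact hk.ded
    exact .mp (.mp (.mp (.ax (LIKEM.a8 a a.neg A)) h1) h0) (.ax (LIKEM.em a))

theorem likem_complete (A : Formula) (h : ∀ v : Formula → Prop, A.evalC v) : LIKEM A := by
  apply elim_atoms A A.atoms.dedup (List.nodup_dedup _)
  intro v
  have hb : A.evalB v = true := (evalC_iff_evalB v A).mp (h _)
  have hk := kalmar v A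
  rw [hb, if_pos rfl] at hk
  exact hk.weaken (List.map_subset _ (List.subset_dedup _))

/-! ### Duality in LIKEM -/

theorem likem_dual (A : Formula) :
    LIKEM (((Formula.dia A).imp ((Formula.box (A.imp Formula.bot)).imp Formula.bot)).and
      (((Formula.box (A.imp Formula.bot)).imp Formula.bot).imp (Formula.dia A))) := by
  have d1 : LIKEM ((Formula.dia A).imp ((Formula.box (A.imp Formula.bot)).imp Formula.bot)) := by
    apply Deriv.toLIKEM; apply Deriv.ded; apply Deriv.ded
    exact .mp (.ax LIKEM.nax)
      (.mp (.mp (.ax (LIKEM.kdia A Formula.bot))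
          (.hyp (show Formula.box (A.imp Formula.bot) ∈
            [Formula.box (A.imp Formula.bot), Formula.dia A] by simp)))
        (.hyp (show Formula.dia A ∈
          [Formula.box (A.imp Formula.bot), Formula.dia A] by simp)))
  have d2 : LIKEM (((Formula.box (A.imp Formula.bot)).imp Formula.bot).imp (Formula.dia A)) := by
    apply Deriv.toLIKEM; apply Deriv.ded
    set Γ : List Formula := [(Formula.box (A.imp Formula.bot)).imp Formula.bot] with hΓ
    have hbox : LIKEM (Formula.box (A.or (A.imp Formula.bot))) := LIKEM.nec _ (LIKEM.em A)
    have hor : Deriv Γ ((Formula.dia A).or (Formula.box (A.imp Formula.bot))) :=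
      .mp (.ax (LIKEM.rv A (A.imp Formula.bot))) (.ax hbox)
    have e1 : Deriv Γ ((Formula.dia A).imp (Formula.dia A)) := .ax (likem_id _)
    have e2 : Deriv Γ ((Formula.box (A.imp Formula.bot)).imp (Formula.dia A)) := by
      apply Deriv.ded
      exact .mp (.ax (LIKEM.exfalso _))
        (.mp (.hyp (show (Formula.box (A.imp Formula.bot)).imp Formula.bot ∈
            Formula.box (A.imp Formula.bot) :: Γ by simp [hΓ]))
          (.hyp (show Formula.box (A.imp Formula.bot) ∈
            Formula.box (A.imp Formula.bot) :: Γ by simp)))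
    exact .mp (.mp (.mp (.ax (LIKEM.a8 _ _ _)) e1) e2) hor
  exact LIKEM.mp _ _ (LIKEM.mp _ _ (LIKEM.a5 _ _) d1) d2

/-! ### Forward direction helpers (ClK) -/

theorem clk_cut1 {P G : Formula} (h1 : ClK P)
    (ht : ∀ v, Formula.evalC v (P.imp G)) : ClK G :=
  ClK.mp _ _ (ClK.taut _ ht) h1

theorem clk_cut2 {P Q G : Formula} (h1 : ClK P) (h2 : ClK Q)
    (ht : ∀ v, Formula.evalC v (P.imp (Q.imp G))) : ClK G :=
  ClK.mp _ _ (ClK.mp _ _ (ClK.taut _ ht) h1) h2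

theorem clk_cut3 {P Q R G : Formula} (h1 : ClK P) (h2 : ClK Q) (h3 : ClK R)
    (ht : ∀ v, Formula.evalC v (P.imp (Q.imp (R.imp G)))) : ClK G :=
  ClK.mp _ _ (ClK.mp _ _ (ClK.mp _ _ (ClK.taut _ ht) h1) h2) h3

theorem clk_cut4 {P Q R S G : Formula} (h1 : ClK P) (h2 : ClK Q) (h3 : ClK R) (h4 : ClK S)
    (ht : ∀ v, Formula.evalC v (P.imp (Q.imp (R.imp (S.imp G))))) : ClK G :=
  ClK.mp _ _ (ClK.mp _ _ (ClK.mp _ _ (ClK.mp _ _ (ClK.taut _ ht) h1) h2) h3) h4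

theorem clk_cut5 {P Q R S T G : Formula} (h1 : ClK P) (h2 : ClK Q) (h3 : ClK R)
    (h4 : ClK S) (h5 : ClK T)
    (ht : ∀ v, Formula.evalC v (P.imp (Q.imp (R.imp (S.imp (T.imp G)))))) : ClK G :=
  ClK.mp _ _ (ClK.mp _ _ (ClK.mp _ _ (ClK.mp _ _ (ClK.mp _ _ (ClK.taut _ ht) h1) h2) h3) h4) h5

/-- From `⊢ P ⊃ Q` derive `⊢ □P ⊃ □Q` in ClK. -/
theorem clk_boxmono {P Q : Formula} (h : ClK (P.imp Q)) :
    ClK ((Formula.box P).imp (Formula.box Q)) :=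
  ClK.mp _ _ (ClK.kbox P Q) (ClK.nec _ h)
/-- Adding the law of excluded middle to LIK yields the classical modal
logic K. -/
theorem likem_eq_clK (A : Formula) : LIKEM A ↔ ClK A := by
  constructor
  · intro h
    induction h with
    | a1 A B => exact ClK.taut _ (by intro v; simp only [Formula.evalC]; tauto)
    | a2 A B C => exact ClK.taut _ (by intro v; simp only [Formula.evalC]; tauto)
    | a3 A B => exact ClK.taut _ (by intro v; simp only [Formula.evalC]; tauto)
    | a4 A B => exact ClK.taut _ (by intro v; simp only [Formula.evalC]; tauto)
    | a5 A B => exact ClK.taut _ (by intro v; simp only [Formula.evalC]; tauto)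
    | a6 A B => exact ClK.taut _ (by intro v; simp only [Formula.evalC]; tauto)
    | a7 A B => exact ClK.taut _ (by intro v; simp only [Formula.evalC]; tauto)
    | a8 A B C => exact ClK.taut _ (by intro v; simp only [Formula.evalC]; tauto)
    | exfalso A => exact ClK.taut _ (by intro v; simp only [Formula.evalC]; tauto)
    | truth => exact ClK.taut _ (by intro v; simp [Formula.evalC])
    | em A => exact ClK.taut _ (by intro v; simp only [Formula.evalC]; tauto)
    | kbox A B => exact ClK.kbox A B
    | kdia A B =>
      have h1 : ClK ((Formula.box (A.imp B)).imp
          (Formula.box ((B.imp Formula.bot).imp (A.imp Formula.bot)))) :=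
        clk_boxmono (ClK.taut _ (by intro v; simp only [Formula.evalC]; tauto))
      have h2 := ClK.kbox (B.imp Formula.bot) (A.imp Formula.bot)
      exact clk_cut4 h1 h2 (ClK.dual A) (ClK.dual B)
        (by intro v; simp only [Formula.evalC]; tauto)
    | nax =>
      have h2 : ClK (Formula.box (Formula.bot.imp Formula.bot)) :=
        ClK.nec _ (ClK.taut _ (by intro v; simp only [Formula.evalC]; tauto))
      exact clk_cut2 (ClK.dual Formula.bot) h2
        (by intro v; simp only [Formula.evalC]; tauto)
    | dp A B =>
      have u1 : ClK ((Formula.box (A.imp Formula.bot)).imp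
          (Formula.box ((B.imp Formula.bot).imp ((A.or B).imp Formula.bot)))) :=
        clk_boxmono (ClK.taut _ (by intro v; simp only [Formula.evalC]; tauto))
      have u2 := ClK.kbox (B.imp Formula.bot) ((A.or B).imp Formula.bot)
      exact clk_cut5 u1 u2 (ClK.dual A) (ClK.dual B) (ClK.dual (A.or B))
        (by intro v; simp only [Formula.evalC]; tauto)
    | rv A B =>
      have u1 : ClK ((Formula.box (A.or B)).imp
          (Formula.box ((A.imp Formula.bot).imp B))) :=
        clk_boxmono (ClK.taut _ (by intro v; simp only [Formula.evalC]; tauto))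
      have u2 := ClK.kbox (A.imp Formula.bot) B
      exact clk_cut3 u1 u2 (ClK.dual A)
        (by intro v; simp only [Formula.evalC]; tauto)
    | mp A B _ _ ih1 ih2 => exact ClK.mp A B ih1 ih2
    | nec A _ ih => exact ClK.nec A ih
  · intro h
    induction h with
    | taut A ht => exact likem_complete A ht
    | kbox A B => exact LIKEM.kbox A B
    | dual A => exact likem_dual A
    | mp A B _ _ ih1 ih2 => exact LIKEM.mp A B ih1 ih2
    | nec A _ ih => exact LIKEM.nec A ih
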